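/- arXiv:1904.08382 — 4 statements merged into one kernel-verified Lean document; each statement's English description precedes it below -/
import Mathlib

section
/- Let G = (V,E) be a directed graph containing a vertex cut (L,M,R) of size |M| ≤ k with k ≤ √m / 2, where m = |E|, and suppose both sides have large symmetric volume in the sense that |𝓛| ≥ Δ and |𝓡| ≥ Δ, where 𝓛 = E(L,L) ∪ E(L,M) ∪ E(M,L) ∪ E(R,L) and 𝓡 = E(R,R) ∪ E(R,M) ∪ E(M,R) ∪ E(R,L). If a pair of edges (e, e') is sampled uniformly at random from E × E (independently), then the probability that e ∈ 𝓛 and e' ∈ 𝓡 is at least Δ/(4m). -/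
/-!
Outside `E(M,M)`, which has at most `|M|² ≤ k² ≤ m/4` edges, every edge lies in `𝓛` or in `𝓡`
(edges from `L` to `R` do not exist), so `|𝓛| + |𝓡| ≥ 3m/4`. Combined with `Δ ≤ |𝓛|, |𝓡|` this
gives `Δ (|𝓛| + |𝓡|) ≤ 2 |𝓛| |𝓡|`, hence `Δ m ≤ 4 |𝓛| |𝓡|`.
-/

variable {V : Type*} [Fintype V] [DecidableEq V]

/-- `E(A,B)`: edges from `A` to `B`. -/
def edgesBetween (E : Finset (V × V)) (A B : Finset V) : Finset (V × V) :=
  E.filter (fun e => e.1 ∈ A ∧ e.2 ∈ B)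

open Finset

section

omit [Fintype V]

@[simp]
theorem mem_edgesBetween {E : Finset (V × V)} {A B : Finset V} {e : V × V} :
    e ∈ edgesBetween E A B ↔ e ∈ E ∧ e.1 ∈ A ∧ e.2 ∈ B :=
  mem_filter

theorem card_edgesBetween_le (E : Finset (V × V)) (A B : Finset V) :
    #(edgesBetween E A B) ≤ #A * #B := by
  rw [← card_product]
  exact card_le_card fun e he => mem_product.mpr (mem_edgesBetween.mp he).2

theorem subset_union_edgesBetween_of_cut {E : Finset (V × V)} {L M R : Finset V}
    (hpart : ∀ v : V, (v ∈ L ∧ v ∉ M ∧ v ∉ R) ∨ (v ∉ L ∧ v ∈ M ∧ v ∉ R) ∨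
      (v ∉ L ∧ v ∉ M ∧ v ∈ R))
    (hcut : edgesBetween E L R = ∅) :
    E ⊆ (edgesBetween E L L ∪ edgesBetween E L M ∪ edgesBetween E M L ∪ edgesBetween E R L) ∪
      (edgesBetween E R R ∪ edgesBetween E R M ∪ edgesBetween E M R ∪ edgesBetween E R L) ∪
      edgesBetween E M M := by
  intro e he
  have hLR : ¬(e.1 ∈ L ∧ e.2 ∈ R) := fun h => by
    simpa [hcut] using (mem_edgesBetween (E := E)).mpr ⟨he, h⟩
  simp only [mem_union, mem_edgesBetween, he, true_and]
  rcases hpart e.1 with h1 | h1 | h1 <;> rcases hpart e.2 with h2 | h2 | h2 <;> simp_all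

end

theorem four_mul_sq_le_of_le_sqrt_div_two {k m : ℝ} (hk0 : 0 ≤ k) (hm : 0 ≤ m)
    (hk : k ≤ √m / 2) : 4 * k ^ 2 ≤ m := by
  have h : (2 * k) ^ 2 ≤ √m ^ 2 := pow_le_pow_left₀ (by linarith) (by linarith) 2
  rw [Real.sq_sqrt hm] at h
  linarith

theorem mul_add_le_two_mul_mul {Δ a b : ℝ} (hΔ : 0 ≤ Δ) (ha : Δ ≤ a) (hb : Δ ≤ b) :
    Δ * (a + b) ≤ 2 * (a * b) := by
  nlinarith [mul_le_mul_of_nonneg_right hb (hΔ.trans ha),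
    mul_le_mul_of_nonneg_right ha (hΔ.trans hb)]

theorem div_four_mul_le_mul_div_sq {Δ a b c m : ℝ} (hΔ : 0 ≤ Δ) (ha : Δ ≤ a) (hb : Δ ≤ b)
    (hm : m ≤ a + b + c) (hc : 4 * c ≤ m) :
    Δ / (4 * m) ≤ a * b / m ^ 2 := by
  rcases le_or_gt m 0 with hm0 | hm0
  · exact (div_nonpos_of_nonneg_of_nonpos hΔ (by linarith)).trans
      (div_nonneg (mul_nonneg (hΔ.trans ha) (hΔ.trans hb)) (sq_nonneg m))
  · rw [div_le_div_iff₀ (by positivity) (by positivity)]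
    have hkey : Δ * m ≤ 4 * (a * b) := by
      nlinarith [mul_add_le_two_mul_mul hΔ ha hb, mul_le_mul_of_nonneg_left hm hΔ]
    nlinarith [mul_le_mul_of_nonneg_right hkey hm0.le]

theorem stmt3_general (E : Finset (V × V)) (k Δ : ℕ) (L M R : Finset V)
    (hpart : ∀ v : V, (v ∈ L ∧ v ∉ M ∧ v ∉ R) ∨ (v ∉ L ∧ v ∈ M ∧ v ∉ R) ∨
      (v ∉ L ∧ v ∉ M ∧ v ∈ R))
    (hcut : edgesBetween E L R = ∅)
    (hM : M.card ≤ k)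
    (hk : (k : ℝ) ≤ Real.sqrt E.card / 2)
    (h𝓛 : Δ ≤ (edgesBetween E L L ∪ edgesBetween E L M ∪ edgesBetween E M L ∪
      edgesBetween E R L).card)
    (h𝓡 : Δ ≤ (edgesBetween E R R ∪ edgesBetween E R M ∪ edgesBetween E M R ∪
      edgesBetween E R L).card) :
    (Δ : ℝ) / (4 * E.card) ≤
      (((edgesBetween E L L ∪ edgesBetween E L M ∪ edgesBetween E M L ∪
          edgesBetween E R L).card : ℝ) *
        ((edgesBetween E R R ∪ edgesBetween E R M ∪ edgesBetween E M R ∪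
          edgesBetween E R L).card : ℝ)) / ((E.card : ℝ) ^ 2) := by
  have hMM : #(edgesBetween E M M) ≤ k ^ 2 :=
    (card_edgesBetween_le E M M).trans (by rw [sq]; exact Nat.mul_le_mul hM hM)
  have hcover : #E ≤ #(edgesBetween E L L ∪ edgesBetween E L M ∪ edgesBetween E M L ∪
      edgesBetween E R L) + #(edgesBetween E R R ∪ edgesBetween E R M ∪ edgesBetween E M R ∪
      edgesBetween E R L) + k ^ 2 :=
    (card_le_card (subset_union_edgesBetween_of_cut hpart hcut)).trans <|
      (card_union_le _ _).trans (add_le_add (card_union_le _ _) hMM)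
  exact div_four_mul_le_mul_div_sq (Nat.cast_nonneg Δ) (by exact_mod_cast h𝓛)
    (by exact_mod_cast h𝓡) (by exact_mod_cast hcover)
    (four_mul_sq_le_of_le_sqrt_div_two (Nat.cast_nonneg _) (Nat.cast_nonneg _) hk)

/-- if `(L,M,R)` is a vertex cut of size ≤ k with `k ≤ √m / 2` and both sides
have symmetric volume at least `Δ`, then a uniformly random independent pair `(e, e')` of edges
satisfies `e ∈ 𝓛` and `e' ∈ 𝓡` with probability at least `Δ / (4m)`. -/
theorem stmt3 (E : Finset (V × V)) (k Δ : ℕ) (L M R : Finset V)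
    (hpart : ∀ v : V, (v ∈ L ∧ v ∉ M ∧ v ∉ R) ∨ (v ∉ L ∧ v ∈ M ∧ v ∉ R) ∨
      (v ∉ L ∧ v ∉ M ∧ v ∈ R))
    (hL : L.Nonempty) (hR : R.Nonempty)
    (hcut : edgesBetween E L R = ∅)
    (hM : M.card ≤ k)
    (hk : (k : ℝ) ≤ Real.sqrt E.card / 2)
    (h𝓛 : Δ ≤ (edgesBetween E L L ∪ edgesBetween E L M ∪ edgesBetween E M L ∪
      edgesBetween E R L).card)
    (h𝓡 : Δ ≤ (edgesBetween E R R ∪ edgesBetween E R M ∪ edgesBetween E M R ∪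
      edgesBetween E R L).card) :
    (Δ : ℝ) / (4 * E.card) ≤
      (((edgesBetween E L L ∪ edgesBetween E L M ∪ edgesBetween E M L ∪
          edgesBetween E R L).card : ℝ) *
        ((edgesBetween E R R ∪ edgesBetween E R M ∪ edgesBetween E M R ∪
          edgesBetween E R L).card : ℝ)) / ((E.card : ℝ) ^ 2) :=
  stmt3_general E k Δ L M R hpart hcut hM hk h𝓛 h𝓡
end

section
/- Let G = (V,E) be a directed graph, let S ⊆ V with s ∈ S, and let T = V \ S. Let π₀, …, π_i be paths in G each starting at s (where each π_{j+1} is a path in the graph G_{j+1} obtained from G_j by reversing the edges of π_j, with G_0 = G), and suppose exactly ℓ of these i+1 paths end at a vertex of T. Then the number of edges from S to T in G_{i+1} equals the number of edges from S to T in G minus ℓ. -/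
variable {V : Type*} [Fintype V] [DecidableEq V]

/-- The (directed) edges of the path `s :: l`. -/
def pathEdges (s : V) (l : List V) : List (V × V) :=
  (s :: l).zip l

/-- A (simple) path from `s` with vertex list `s :: l` in the graph with edge multiset `F`. -/
def IsPathFrom (F : Multiset (V × V)) (s : V) (l : List V) : Prop :=
  List.Chain (fun a b => (a, b) ∈ F) s l ∧ (s :: l).Nodup

/-- The graph obtained by reversing the edges of the path `s :: l`. -/
def revAlong (F : Multiset (V × V)) (s : V) (l : List V) : Multiset (V × V) :=
  F - (pathEdges s l : Multiset (V × V)) + ((pathEdges s l).map Prod.swap : Multiset (V × V))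

lemma pathEdges_cons (a b : V) (t : List V) :
    pathEdges a (b :: t) = (a, b) :: pathEdges b t := by
  simp [pathEdges]

lemma mem_pathEdges {a : V} {l : List V} {e : V × V} (h : e ∈ pathEdges a l) :
    e.1 ∈ a :: l ∧ e.2 ∈ l := by
  obtain ⟨x, y⟩ := e
  exact List.of_mem_zip h

lemma pathEdges_nodup : ∀ (l : List V) (a : V), (a :: l).Nodup → (pathEdges a l).Nodup
  | [], a, _ => by simp [pathEdges]
  | b :: t, a, h => by
    rw [pathEdges_cons]
    refine List.nodup_cons.2 ⟨?_, pathEdges_nodup t b (List.nodup_cons.1 h).2⟩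
    intro hmem
    exact (List.nodup_cons.1 h).1 (mem_pathEdges hmem).1

lemma pathEdges_mem_of_chain : ∀ (l : List V) (a : V) (F : Multiset (V × V)),
    List.Chain (fun x y => (x, y) ∈ F) a l → ∀ e ∈ pathEdges a l, e ∈ F
  | [], _, _, _ => by simp [pathEdges]
  | b :: t, a, F, h => by
    rw [pathEdges_cons]
    obtain ⟨hab, ht⟩ := List.chain_cons.1 h
    intro e he
    rcases List.mem_cons.1 he with rfl | he
    · exact hab
    · exact pathEdges_mem_of_chain t b F ht e he

lemma cross (S : Finset V) : ∀ (l : List V) (a : V),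
    ((pathEdges a l).countP (fun e => decide (e.1 ∈ S ∧ e.2 ∉ S)) : ℤ)
      + (if a ∈ S then 0 else 1)
    = ((pathEdges a l).countP (fun e => decide (e.2 ∈ S ∧ e.1 ∉ S)) : ℤ)
      + (if ((a :: l).getLast (by simp)) ∈ S then 0 else 1)
  | [], a => by simp [pathEdges]; by_cases h : a ∈ S <;> simp [h]
  | b :: t, a => by
    have ih := cross S t b
    rw [pathEdges_cons]
    have hlast : ((a :: b :: t).getLast (by simp)) = ((b :: t).getLast (by simp)) := by
      simp [List.getLast_cons]
    rw [hlast]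
    simp only [List.countP_cons]
    by_cases ha : a ∈ S <;> by_cases hb : b ∈ S <;>
      simp [ha, hb] at ih ⊢ <;> omega

lemma step (F : Multiset (V × V)) (s : V) (l : List V) (S : Finset V) (hs : s ∈ S)
    (h : IsPathFrom F s l) :
    ((revAlong F s l).filter (fun e => e.1 ∈ S ∧ e.2 ∉ S)).card
      + (if ((s :: l).getLast (by simp)) ∈ S then 0 else 1)
    = (F.filter (fun e => e.1 ∈ S ∧ e.2 ∉ S)).card := by
  have hPF : (pathEdges s l : Multiset (V × V)) ≤ F := by
    rw [Multiset.le_iff_count]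
    intro e
    by_cases he : e ∈ pathEdges s l
    · have h1 : (pathEdges s l : Multiset (V × V)).count e ≤ 1 := by
        have := Multiset.nodup_iff_count_le_one.1 (Multiset.coe_nodup.2 (pathEdges_nodup l s h.2)) e
        exact this
      have h2 : 1 ≤ F.count e :=
        Multiset.one_le_count_iff_mem.2 (pathEdges_mem_of_chain l s F h.1 e he)
      omega
    · have h1 : (pathEdges s l : Multiset (V × V)).count e = 0 :=
        Multiset.count_eq_zero.2 (by simpa using he)
      omega
  have hfil : Multiset.filter (fun e => e.1 ∈ S ∧ e.2 ∉ S) (pathEdges s l : Multiset (V × V))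
      ≤ Multiset.filter (fun e => e.1 ∈ S ∧ e.2 ∉ S) F := Multiset.filter_le_filter _ hPF
  have hle := Multiset.card_le_card hfil
  have hc := cross S l s
  have hfwd : (Multiset.filter (fun e => e.1 ∈ S ∧ e.2 ∉ S)
        (pathEdges s l : Multiset (V × V))).card
      = (pathEdges s l).countP (fun e => decide (e.1 ∈ S ∧ e.2 ∉ S)) := by
    simp [List.countP_eq_length_filter]
  have hbwd : (Multiset.filter (fun e => e.1 ∈ S ∧ e.2 ∉ S)
        ((List.map Prod.swap (pathEdges s l) : List (V × V)) : Multiset (V × V))).card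
      = (pathEdges s l).countP (fun e => decide (e.2 ∈ S ∧ e.1 ∉ S)) := by
    simp only [Multiset.filter_coe, Multiset.coe_card, ← List.countP_eq_length_filter,
      List.countP_map]
    refine List.countP_congr ?_
    intro e _
    simp [Function.comp]
  rw [revAlong, Multiset.filter_add, Multiset.card_add, Multiset.filter_sub,
    Multiset.card_sub hfil, hfwd, hbwd]
  rw [hfwd] at hle
  simp only [hs, if_pos] at hc
  by_cases hlast : ((s :: l).getLast (by simp)) ∈ S <;>
    simp only [hlast, if_pos, if_neg, not_false_iff] at hc ⊢ <;> omega

/-- let `G_0 = G`, and `G_{j+1}` be obtained from `G_j` by reversing the edges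
of a path `π_j` from `s` in `G_j`.  Let `s ∈ S` and `T = V \ S`.  If exactly `ℓ` of the
paths `π_0, …, π_i` end at a vertex of `T`, then the number of edges from `S` to `T` in
`G_{i+1}` equals that number in `G` minus `ℓ`. -/
theorem stmt8 (E : Multiset (V × V)) (s : V) (S : Finset V) (hs : s ∈ S)
    (i ℓ : ℕ) (G : ℕ → Multiset (V × V)) (π : ℕ → List V)
    (hG0 : G 0 = E)
    (hpath : ∀ j ≤ i, IsPathFrom (G j) s (π j))
    (hrev : ∀ j ≤ i, G (j + 1) = revAlong (G j) s (π j))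
    (hℓ : ℓ = ((Finset.range (i + 1)).filter
      (fun j => (s :: π j).getLast (by simp) ∉ S)).card) :
    ((G (i + 1)).filter (fun e => e.1 ∈ S ∧ e.2 ∉ S)).card + ℓ =
      (E.filter (fun e => e.1 ∈ S ∧ e.2 ∉ S)).card := by
  subst hℓ
  suffices h : ∀ k, k ≤ i + 1 →
      ((G k).filter (fun e => e.1 ∈ S ∧ e.2 ∉ S)).card
        + ((Finset.range k).filter (fun j => (s :: π j).getLast (by simp) ∉ S)).card
      = (E.filter (fun e => e.1 ∈ S ∧ e.2 ∉ S)).card from h (i + 1) le_rfl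
  intro k
  induction k with
  | zero => simp [hG0]
  | succ k ih =>
    intro hk
    have hk' : k ≤ i := Nat.lt_succ_iff.mp hk
    have hstep := step (G k) s (π k) S hs (hpath k hk')
    rw [← hrev k hk'] at hstep
    have ihk := ih (by omega)
    rw [Finset.range_add_one, Finset.filter_insert]
    by_cases hK : (s :: π k).getLast (by simp) ∈ S
    · rw [if_neg (by simpa using hK)]
      rw [if_pos hK] at hstep
      omega
    · rw [if_pos hK, Finset.card_insert_of_notMem (by simp)]
      rw [if_neg hK] at hstep
      omega
end

section
/- Let G = (V,E) be a directed graph and s ∈ V, and let G'_s be the split graph: for every v ≠ s, two vertices v_in and v_out with an edge (v_in, v_out), a single vertex s_in = s_out, and for every edge (v,w) ∈ E an edge (v_out, w_in). If C is a k-vertex-out component of G containing s, then C' := {v_out : v ∈ C} ∪ {v_in : v ∈ C} ∪ {v_in : v ∈ B}, where B is the set of boundary vertices of C, is a k-edge-out component of G'_s containing s_out; moreover every edge leaving C' in G'_s is of the form (v_in, v_out) for some v ∈ B. -/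
/-! An edge `(u_out, w_in)` with `u ∈ C` never leaves `C'`, since `w ∈ C ∪ B` and `C'` contains
the in-copies of `C ∪ B`. So the only edges leaving `C'` are `(v_in, v_out)` with `v ∈ B`, at most
one per boundary vertex. -/

variable {V : Type*} [Fintype V] [DecidableEq V]

/-- The in-copy of a vertex in the split graph (with `s_in` identified with `s_out`). -/
def inV (s v : V) : V ⊕ V := if v = s then Sum.inr s else Sum.inl v

/-- The out-copy of a vertex in the split graph. -/
def outV (v : V) : V ⊕ V := Sum.inr v

/-- The edges of the split graph `G'_s`: an edge `(v_out, w_in)` for every `(v,w) ∈ E` and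
an edge `(v_in, v_out)` for every vertex `v`. -/
def splitEdges (E : Finset (V × V)) (s : V) : Finset ((V ⊕ V) × (V ⊕ V)) :=
  (E.image (fun e => (outV e.1, inV s e.2))) ∪
    (Finset.univ.image (fun v => (inV s v, outV v)))

/-- The boundary `B` of `C`: vertices outside `C` with an incoming edge from `C`. -/
def boundary (E : Finset (V × V)) (C : Finset V) : Finset V :=
  Finset.univ.filter (fun v => v ∉ C ∧ ∃ u ∈ C, (u, v) ∈ E)

open Finset

lemma outV_injective {α : Type*} : Function.Injective (outV : α → α ⊕ α) :=
  Sum.inr_injective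

lemma inV_eq_outV_iff {α : Type*} [DecidableEq α] {s v w : α} :
    inV s v = outV w ↔ v = s ∧ w = s := by
  unfold inV outV
  split_ifs with h <;> simp [h, eq_comm]

lemma inV_injective {α : Type*} [DecidableEq α] (s : α) : Function.Injective (inV s) := by
  intro v w h
  unfold inV at h
  split_ifs at h <;> simp_all

lemma mem_boundary {E : Finset (V × V)} {C : Finset V} {v : V} :
    v ∈ boundary E C ↔ v ∉ C ∧ ∃ u ∈ C, (u, v) ∈ E := by
  simp [boundary]

def splitComponent (E : Finset (V × V)) (s : V) (C : Finset V) : Finset (V ⊕ V) :=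
  C.image outV ∪ C.image (inV s) ∪ (boundary E C).image (inV s)

section splitComponent

variable {E : Finset (V × V)} {s : V} {C : Finset V}

lemma outV_mem_splitComponent_iff (hsC : s ∈ C) (v : V) :
    outV v ∈ splitComponent E s C ↔ v ∈ C := by
  simp only [splitComponent, mem_union, mem_image, outV_injective.eq_iff, inV_eq_outV_iff]
  constructor
  · rintro ((⟨w, hw, rfl⟩ | ⟨w, -, -, rfl⟩) | ⟨w, -, -, rfl⟩) <;> assumption
  · exact fun hv => Or.inl (Or.inl ⟨v, hv, rfl⟩)

lemma inV_mem_splitComponent_iff (hsC : s ∈ C) (v : V) :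
    inV s v ∈ splitComponent E s C ↔ v ∈ C ∨ v ∈ boundary E C := by
  simp only [splitComponent, mem_union, mem_image, (inV_injective s).eq_iff]
  constructor
  · rintro ((⟨w, hw, hwv⟩ | ⟨w, hw, rfl⟩) | ⟨w, hw, rfl⟩)
    · obtain ⟨rfl, -⟩ := inV_eq_outV_iff.1 hwv.symm
      exact Or.inl hsC
    · exact Or.inl hw
    · exact Or.inr hw
  · rintro (hv | hv)
    · exact Or.inl (Or.inr ⟨v, hv, rfl⟩)
    · exact Or.inr ⟨v, hv, rfl⟩

def splitLeavingEdges (E : Finset (V × V)) (s : V) (C : Finset V) :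
    Finset ((V ⊕ V) × (V ⊕ V)) :=
  (splitEdges E s).filter fun e => e.1 ∈ splitComponent E s C ∧ e.2 ∉ splitComponent E s C

lemma exists_mem_boundary_of_mem_splitLeavingEdges (hsC : s ∈ C) {e : (V ⊕ V) × (V ⊕ V)}
    (he : e ∈ splitLeavingEdges E s C) : ∃ v ∈ boundary E C, e = (inV s v, outV v) := by
  obtain ⟨hmem, hsrc, htgt⟩ := mem_filter.1 he
  simp only [splitEdges, mem_union, mem_image, mem_univ, true_and] at hmem
  rcases hmem with ⟨⟨u, w⟩, huw, rfl⟩ | ⟨v, rfl⟩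
  · rw [outV_mem_splitComponent_iff hsC] at hsrc
    rw [inV_mem_splitComponent_iff hsC, not_or] at htgt
    exact absurd (mem_boundary.2 ⟨htgt.1, u, hsrc, huw⟩) htgt.2
  · rw [inV_mem_splitComponent_iff hsC] at hsrc
    rw [outV_mem_splitComponent_iff hsC] at htgt
    exact ⟨v, hsrc.resolve_left htgt, rfl⟩

lemma card_splitLeavingEdges_le (hsC : s ∈ C) :
    (splitLeavingEdges E s C).card ≤ (boundary E C).card := by
  calc (splitLeavingEdges E s C).card
      ≤ ((boundary E C).image fun v => (inV s v, outV v)).card := by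
        refine card_le_card fun e he => ?_
        obtain ⟨v, hv, rfl⟩ := exists_mem_boundary_of_mem_splitLeavingEdges hsC he
        exact mem_image_of_mem _ hv
    _ ≤ (boundary E C).card := card_image_le

end splitComponent

/-- if `C` is a `k`-vertex-out component of `G` containing `s` with boundary
`B`, then `C' = {v_out : v ∈ C} ∪ {v_in : v ∈ C} ∪ {v_in : v ∈ B}` is a `k`-edge-out
component of the split graph `G'_s` containing `s_out`, and every edge leaving `C'`
is of the form `(v_in, v_out)` for some `v ∈ B`. -/
theorem stmt11 (E : Finset (V × V)) (s : V) (k : ℕ) (C : Finset V)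
    (hsC : s ∈ C) (hB : (boundary E C).card ≤ k) :
    outV s ∈ (C.image outV ∪ C.image (inV s) ∪ (boundary E C).image (inV s)) ∧
      ((splitEdges E s).filter (fun e =>
          e.1 ∈ (C.image outV ∪ C.image (inV s) ∪ (boundary E C).image (inV s)) ∧
          e.2 ∉ (C.image outV ∪ C.image (inV s) ∪ (boundary E C).image (inV s)))).card ≤ k ∧
      ∀ e ∈ (splitEdges E s).filter (fun e =>
          e.1 ∈ (C.image outV ∪ C.image (inV s) ∪ (boundary E C).image (inV s)) ∧
          e.2 ∉ (C.image outV ∪ C.image (inV s) ∪ (boundary E C).image (inV s))),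
        ∃ v ∈ boundary E C, e = (inV s v, outV v) :=
  ⟨(outV_mem_splitComponent_iff hsC s).2 hsC,
    (card_splitLeavingEdges_le hsC).trans hB,
    fun _ he => exists_mem_boundary_of_mem_splitLeavingEdges hsC he⟩
end

section
/- Let G = (V,E) be a directed graph with s ∈ V and let G'_s be the split graph of G at s. If C' is a minimal k-edge-out component of G'_s containing s_out, then C := {v ∈ V : v_out ∈ C'} is a k-vertex-out component of G containing s. In particular, the number of boundary vertices of C in G is at most the number of edges leaving C' in G'_s. -/
variable {V : Type*} [Fintype V] [DecidableEq V]

/-- The edges leaving a set `C'` in the split graph. -/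
def leaving (E : Finset (V × V)) (s : V) (C' : Finset (V ⊕ V)) :
    Finset ((V ⊕ V) × (V ⊕ V)) :=
  (splitEdges E s).filter (fun e => e.1 ∈ C' ∧ e.2 ∉ C')

/-- if `C'` is a minimal `k`-edge-out component of the split graph `G'_s`
containing `s_out`, then `C = {v : v_out ∈ C'}` is a `k`-vertex-out component of `G`
containing `s`; in particular `|B| ≤ |E'(C', V' \ C')| ≤ k`. -/
theorem stmt12 (E : Finset (V × V)) (s : V) (k : ℕ) (C' : Finset (V ⊕ V))
    (hsC' : outV s ∈ C')
    (hk : (leaving E s C').card ≤ k)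
    (hmin : ∀ D : Finset (V ⊕ V), D ⊂ C' → outV s ∈ D →
      (leaving E s C').card < (leaving E s D).card) :
    s ∈ Finset.univ.filter (fun v : V => outV v ∈ C') ∧
      (boundary E (Finset.univ.filter (fun v : V => outV v ∈ C'))).card ≤
        (leaving E s C').card ∧
      (boundary E (Finset.univ.filter (fun v : V => outV v ∈ C'))).card ≤ k := by
  classical
  set C : Finset V := Finset.univ.filter (fun v : V => outV v ∈ C') with hC
  have hsC : s ∈ C := by simp [hC, hsC']
  have hB : (boundary E C).card ≤ (leaving E s C').card := by
    let f : V → (V ⊕ V) × (V ⊕ V) := fun v =>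
      if inV s v ∈ C' then (inV s v, outV v)
      else if h : ∃ u, outV u ∈ C' ∧ (u, v) ∈ E then (outV h.choose, inV s v)
      else (outV s, outV s)
    apply Finset.card_le_card_of_injOn f
    · intro v hv
      rw [Finset.mem_coe] at hv ⊢
      simp only [boundary, Finset.mem_filter, Finset.mem_univ, true_and] at hv
      obtain ⟨hvC, u, hu, huv⟩ := hv
      rw [hC, Finset.mem_filter] at hvC hu
      have hvC' : outV v ∉ C' := fun h => hvC ⟨Finset.mem_univ v, h⟩
      have hvs : v ≠ s := fun h => hvC' (h ▸ hsC')
      by_cases hc : inV s v ∈ C'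
      · simp only [f, if_pos hc, leaving, Finset.mem_filter]
        refine ⟨?_, hc, hvC'⟩
        simp only [splitEdges, Finset.mem_union, Finset.mem_image]
        exact Or.inr ⟨v, Finset.mem_univ v, rfl⟩
      · have hex : ∃ u, outV u ∈ C' ∧ (u, v) ∈ E := ⟨u, hu.2, huv⟩
        simp only [f, if_neg hc, dif_pos hex, leaving, Finset.mem_filter]
        obtain ⟨hu', huv'⟩ := hex.choose_spec
        refine ⟨?_, hu', hc⟩
        simp only [splitEdges, Finset.mem_union, Finset.mem_image]
        exact Or.inl ⟨(hex.choose, v), huv', rfl⟩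
    · intro v hv w hw hfw
      simp only [boundary, Finset.coe_filter, Set.mem_setOf_eq, Finset.mem_univ,
        true_and, hC, Finset.mem_filter] at hv hw
      have hvs : v ≠ s := by
        rintro rfl; exact hv.1 hsC'
      have hws : w ≠ s := by
        rintro rfl; exact hw.1 hsC'
      have hinv : inV s v = Sum.inl v := by simp [inV, hvs]
      have hinw : inV s w = Sum.inl w := by simp [inV, hws]
      have hexv : ∃ u, outV u ∈ C' ∧ (u, v) ∈ E := by
        obtain ⟨u, hu, huv⟩ := hv.2
        exact ⟨u, hu, huv⟩
      have hexw : ∃ u, outV u ∈ C' ∧ (u, w) ∈ E := by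
        obtain ⟨u, hu, huw⟩ := hw.2
        exact ⟨u, hu, huw⟩
      have h2 : (f v).2 = (f w).2 := by rw [hfw]
      by_cases hcv : inV s v ∈ C' <;> by_cases hcw : inV s w ∈ C'
      · simp only [f, if_pos hcv, if_pos hcw] at h2
        exact Sum.inr.inj h2
      · simp only [f, if_pos hcv, if_neg hcw, dif_pos hexw] at h2
        rw [hinw] at h2
        exact absurd h2 (by simp [outV])
      · simp only [f, if_neg hcv, if_pos hcw, dif_pos hexv] at h2
        rw [hinv] at h2
        exact absurd h2.symm (by simp [outV])
      · simp only [f, if_neg hcv, if_neg hcw, dif_pos hexv, dif_pos hexw] at h2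
        rw [hinv, hinw] at h2
        exact Sum.inl.inj h2
  exact ⟨hsC, hB, hB.trans hk⟩
end
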